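/- arXiv:2206.06671 — 4 statements merged into one kernel-verified Lean document; each statement's English description precedes it below -/
import Mathlib

section
/- Let n ≥ 1 and let u : ℝⁿ → ℝⁿ be differentiable on ℝⁿ and ℤⁿ-periodic (u(x + k) = u(x) for all x ∈ ℝⁿ, k ∈ ℤⁿ). If the symmetric gradient vanishes identically, i.e. e(u)(x) := ½(Du(x) + Du(x)ᵀ) = 0 for all x ∈ ℝⁿ, then u is constant. -/
open Matrix

/-- A differentiable, ℤⁿ-periodic vector field on ℝⁿ with vanishing symmetric gradient
`e(u)(x) = ½(Du(x) + Du(x)ᵀ) = 0` is constant. -/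
theorem periodic_vanishing_symmetric_gradient_is_constant
    (n : ℕ) (hn : 1 ≤ n) (u : (Fin n → ℝ) → (Fin n → ℝ))
    (hu : Differentiable ℝ u)
    (hper : ∀ (x : Fin n → ℝ) (k : Fin n → ℤ), u (x + fun i => (k i : ℝ)) = u x)
    (hsym : ∀ x : Fin n → ℝ,
      (1 / 2 : ℝ) •
        ((Matrix.of fun i j => fderiv ℝ u x (Pi.single j 1) i) +
          (Matrix.of fun i j => fderiv ℝ u x (Pi.single j 1) i)ᵀ) = 0) :
    ∃ a : Fin n → ℝ, ∀ x : Fin n → ℝ, u x = a := by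
  classical
  set f : (Fin n → ℝ) → (Fin n → ℝ) →L[ℝ] (Fin n → ℝ) := fun x => fderiv ℝ u x with hfdef
  -- Entrywise antisymmetry of the Jacobian
  have hA : ∀ (x : Fin n → ℝ) (i j : Fin n),
      f x ((Pi.single j 1 : Fin n → ℝ)) i = - f x ((Pi.single i 1 : Fin n → ℝ)) j := by
    intro x i j
    have h2 := congrFun (congrFun (hsym x) i) j
    simp only [Matrix.smul_apply, Matrix.add_apply, Matrix.transpose_apply, Matrix.of_apply,
      Matrix.zero_apply, smul_eq_mul] at h2
    have : f x ((Pi.single j 1 : Fin n → ℝ)) i + f x ((Pi.single i 1 : Fin n → ℝ)) j = 0 := by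
      have := h2
      simp only [hfdef]
      linarith
    linarith
  -- Representation of f x v via basis vectors
  have hrep : ∀ (x v : Fin n → ℝ) (i : Fin n),
      f x v i = ∑ j, v j * f x ((Pi.single j 1 : Fin n → ℝ)) i := by
    intro x v i
    have hv : v = ∑ j, v j • (Pi.single j 1 : Fin n → ℝ) := by
      ext k
      simp [Finset.sum_apply, Pi.single_apply]
    conv_lhs => rw [hv]
    rw [map_sum]
    simp [Finset.sum_apply, smul_eq_mul]
  -- Antisymmetry of the bilinear form
  have hanti : ∀ (x v w : Fin n → ℝ),
      (∑ i, f x v i * w i) + (∑ i, f x w i * v i) = 0 := by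
    intro x v w
    have e1 : (∑ i, f x v i * w i) = ∑ i, ∑ j, v j * f x ((Pi.single j 1 : Fin n → ℝ)) i * w i := by
      refine Finset.sum_congr rfl fun i _ => ?_
      rw [hrep, Finset.sum_mul]
    have e2 : (∑ i, f x w i * v i) = ∑ i, ∑ j, w i * f x ((Pi.single i 1 : Fin n → ℝ)) j * v j := by
      rw [show (∑ i, f x w i * v i) = ∑ i, ∑ j, w j * f x ((Pi.single j 1 : Fin n → ℝ)) i * v i from
        Finset.sum_congr rfl fun i _ => by rw [hrep, Finset.sum_mul], Finset.sum_comm]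
    rw [e1, e2, ← Finset.sum_add_distrib]
    refine Finset.sum_eq_zero fun i _ => ?_
    rw [← Finset.sum_add_distrib]
    refine Finset.sum_eq_zero fun j _ => ?_
    rw [hA x j i]
    ring
  -- Derivative along a line, coordinatewise
  have hline : ∀ (x h : Fin n → ℝ) (i : Fin n) (t : ℝ),
      HasDerivAt (fun t : ℝ => u (x + t • h) i) (f (x + t • h) h i) t := by
    intro x h i t
    have h1 : HasDerivAt (fun t : ℝ => x + t • h) h t := by
      simpa using ((hasDerivAt_id t).smul_const h).const_add x
    have h2 : HasDerivAt (fun t : ℝ => u (x + t • h)) (f (x + t • h) h) t :=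
      ((hu (x + t • h)).hasFDerivAt).comp_hasDerivAt t h1
    exact (ContinuousLinearMap.proj (R := ℝ) (φ := fun _ : Fin n => ℝ)
      i).hasFDerivAt.comp_hasDerivAt t h2
  -- The key identity: ⟨u(q) - u(p), q - p⟩ = 0
  have hdot : ∀ (p q : Fin n → ℝ), (∑ i, (u q i - u p i) * (q i - p i)) = 0 := by
    intro p q
    set v := q - p with hvdef
    have hg : ∀ t : ℝ, HasDerivAt (fun t : ℝ => ∑ i, u (p + t • v) i * v i) 0 t := by
      intro t
      have hD : HasDerivAt (fun t : ℝ => ∑ i, u (p + t • v) i * v i)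
          (∑ i, f (p + t • v) v i * v i) t :=
        HasDerivAt.fun_sum fun i _ => (hline p v i t).mul_const (v i)
      have h0 : (∑ i, f (p + t • v) v i * v i) = 0 := by
        have := hanti (p + t • v) v v; linarith
      rwa [h0] at hD
    have hc := is_const_of_deriv_eq_zero (f := fun t : ℝ => ∑ i, u (p + t • v) i * v i)
      (fun t => (hg t).differentiableAt) (fun t => (hg t).deriv) 1 0
    have h1 : p + (1 : ℝ) • v = q := by simp [hvdef]
    have h0 : p + (0 : ℝ) • v = p := by simp
    rw [h1, h0] at hc
    have : ∀ i, q i - p i = v i := fun i => by simp [hvdef]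
    simp only [this, sub_mul, Finset.sum_sub_distrib, hc, sub_self]
  -- Differentiate the key identity: linear expansion
  have hkey : ∀ (x y h : Fin n → ℝ),
      (∑ i, f x h i * (x i - y i)) + (∑ i, (u x i - u y i) * h i) = 0 := by
    intro x y h
    have hψ : HasDerivAt (fun t : ℝ => ∑ i, (u (x + t • h) i - u y i) * ((x + t • h) i - y i))
        ((∑ i, f x h i * (x i - y i)) + (∑ i, (u x i - u y i) * h i)) 0 := by
      have hterm : ∀ i : Fin n,
          HasDerivAt (fun t : ℝ => (u (x + t • h) i - u y i) * ((x + t • h) i - y i))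
            (f x h i * (x i - y i) + (u x i - u y i) * h i) 0 := by
        intro i
        have ha : HasDerivAt (fun t : ℝ => u (x + t • h) i - u y i) (f (x + (0:ℝ) • h) h i) 0 := by
          simpa using (hline x h i 0).sub_const (u y i)
        have hb : HasDerivAt (fun t : ℝ => (x + t • h) i - y i) (h i) 0 := by
          have : HasDerivAt (fun t : ℝ => x i + t * h i - y i) (h i) 0 := by
            simpa using (((hasDerivAt_id (0:ℝ)).mul_const (h i)).const_add (x i)).sub_const (y i)
          simpa using this
        have := ha.fun_mul hb
        simp only [zero_smul, add_zero] at this ⊢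
        convert this using 1
      have := HasDerivAt.fun_sum (u := Finset.univ) fun i (_ : i ∈ Finset.univ) => hterm i
      rw [Finset.sum_add_distrib] at this
      exact this
    have hzero : (fun t : ℝ => ∑ i, (u (x + t • h) i - u y i) * ((x + t • h) i - y i))
        = fun _ : ℝ => (0 : ℝ) := by
      funext t
      exact hdot y (x + t • h)
    rw [hzero] at hψ
    exact hψ.unique (hasDerivAt_const 0 0)
  -- u is affine: u(x+w) = u(x) + f(x)w
  have haff : ∀ (x w : Fin n → ℝ) (j : Fin n), u (x + w) j = u x j + f x w j := by
    intro x w j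
    have h1 := hkey x (x + w) ((Pi.single j 1 : Fin n → ℝ))
    have h2 : ∀ i, x i - (x + w) i = - w i := fun i => by simp
    simp only [h2] at h1
    have h3 := hanti x ((Pi.single j 1 : Fin n → ℝ)) w
    -- ∑ i, f x (single j 1) i * (-w i) = ∑ i, f x w i * single j 1 i
    have h4 : (∑ i, f x ((Pi.single j 1 : Fin n → ℝ)) i * (- w i)) = ∑ i, f x w i * (Pi.single j 1 : Fin n → ℝ) i := by
      have : (∑ i, f x ((Pi.single j 1 : Fin n → ℝ)) i * (- w i)) = - ∑ i, f x ((Pi.single j 1 : Fin n → ℝ)) i * w i := by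
        rw [← Finset.sum_neg_distrib]; exact Finset.sum_congr rfl fun i _ => by ring
      rw [this]; linarith
    rw [h4] at h1
    have h5 : (∑ i, f x w i * (Pi.single j 1 : Fin n → ℝ) i) = f x w j := by
      rw [Finset.sum_eq_single j]
      · simp
      · intro b _ hb; simp [Pi.single_apply, hb]
      · simp
    have h6 : (∑ i, (u x i - u (x + w) i) * (Pi.single j 1 : Fin n → ℝ) i) = u x j - u (x + w) j := by
      rw [Finset.sum_eq_single j]
      · simp
      · intro b _ hb; simp [Pi.single_apply, hb]
      · simp
    rw [h5, h6] at h1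
    linarith
  -- Periodicity kills the derivative
  have hf0 : ∀ (x : Fin n → ℝ) (j i : Fin n), f x ((Pi.single j 1 : Fin n → ℝ)) i = 0 := by
    intro x j i
    set k : Fin n → ℤ := fun i => if i = j then 1 else 0 with hk
    have hcast : (fun i => ((k i : ℤ) : ℝ)) = (Pi.single j 1 : Fin n → ℝ) := by
      funext i
      simp [hk, Pi.single_apply]
    have hp := hper x k
    rw [hcast] at hp
    have := haff x ((Pi.single j 1 : Fin n → ℝ)) i
    rw [hp] at this
    linarith
  -- derivative vanishes everywhere
  have hf0' : ∀ (x w : Fin n → ℝ) (i : Fin n), f x w i = 0 := by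
    intro x w i
    rw [hrep]
    exact Finset.sum_eq_zero fun j _ => by rw [hf0]; ring
  refine ⟨u 0, fun x => ?_⟩
  funext j
  have := haff 0 x j
  rw [hf0'] at this
  simpa using this
end

section
/- (Piola identity) Let n ≥ 1 and let S : ℝⁿ → ℝⁿ be twice continuously differentiable, with Jacobian matrix F(x) := DS(x). Then the column divergences of the adjugate of F vanish identically: for every index i ∈ {1,…,n} and every x ∈ ℝⁿ, ∑_{j=1}^{n} ∂_{x_j} [ (adj F(x))_{j i} ] = 0. Equivalently, if F(x) is invertible with J(x) := det F(x), then ∑_{j=1}^{n} ∂_{x_j} [ J(x) (F(x)⁻¹)_{j i} ] = 0 for each i. -/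
open Matrix

section PiolaAux

variable {n : ℕ} {S : (Fin n → ℝ) → (Fin n → ℝ)}

private lemma piola_entry_contDiff (hS : ContDiff ℝ 2 S) (a b : Fin n) :
    ContDiff ℝ 1 fun y => fderiv ℝ S y (Pi.single b 1) a := by
  have h1 : ContDiff ℝ 1 (fderiv ℝ S) := hS.fderiv_right (by norm_num)
  exact contDiff_pi.mp (h1.clm_apply contDiff_const) a

private lemma piola_entry_fderiv (hS : ContDiff ℝ 2 S) (a b : Fin n) (x v : Fin n → ℝ) :
    fderiv ℝ (fun y => fderiv ℝ S y (Pi.single b 1) a) x v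
      = fderiv ℝ (fderiv ℝ S) x v (Pi.single b 1) a := by
  have h1 : ContDiff ℝ 1 (fderiv ℝ S) := hS.fderiv_right (by norm_num)
  have hd : DifferentiableAt ℝ (fderiv ℝ S) x := (h1.differentiable (by norm_num)) x
  set Φ : ((Fin n → ℝ) →L[ℝ] (Fin n → ℝ)) →L[ℝ] ℝ :=
    (ContinuousLinearMap.proj a).comp
      (ContinuousLinearMap.apply ℝ (Fin n → ℝ) (Pi.single b 1)) with hΦ
  have h : HasFDerivAt (fun y => Φ (fderiv ℝ S y))
      (Φ.comp (fderiv ℝ (fderiv ℝ S) x)) x := Φ.hasFDerivAt.comp x hd.hasFDerivAt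
  have h2 : fderiv ℝ (fun y => fderiv ℝ S y (Pi.single b 1) a) x
      = Φ.comp (fderiv ℝ (fderiv ℝ S) x) := h.fderiv
  rw [h2]; rfl

private lemma piola_entry_symm (hS : ContDiff ℝ 2 S) (a b c : Fin n) (x : Fin n → ℝ) :
    fderiv ℝ (fun y => fderiv ℝ S y (Pi.single b 1) a) x (Pi.single c 1)
      = fderiv ℝ (fun y => fderiv ℝ S y (Pi.single c 1) a) x (Pi.single b 1) := by
  have h1 : ContDiff ℝ 1 (fderiv ℝ S) := hS.fderiv_right (by norm_num)
  rw [piola_entry_fderiv hS, piola_entry_fderiv hS]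
  have hsymm := second_derivative_symmetric (f := S)
    (fun y => ((hS.differentiable (by norm_num)) y).hasFDerivAt)
    (((h1.differentiable (by norm_num)) x).hasFDerivAt) (Pi.single c 1) (Pi.single b 1)
  rw [hsymm]

private lemma piola_adjugate_entry (A : Matrix (Fin n) (Fin n) ℝ) (i j : Fin n) :
    A.adjugate j i = ∑ σ : Equiv.Perm (Fin n),
      (if σ j = i then ((Equiv.Perm.sign σ : ℤ) : ℝ) * ∏ k ∈ Finset.univ.erase j, A (σ k) k
       else 0) := by
  classical
  rw [Matrix.adjugate_apply, Matrix.det_apply]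
  refine Finset.sum_congr rfl fun σ _ => ?_
  by_cases h : σ j = i
  · rw [if_pos h]
    have hsplit : ∏ k, (A.updateRow i (Pi.single j 1)) (σ k) k
        = (A.updateRow i (Pi.single j 1)) (σ j) j *
            ∏ k ∈ Finset.univ.erase j, (A.updateRow i (Pi.single j 1)) (σ k) k :=
      (Finset.mul_prod_erase Finset.univ _ (Finset.mem_univ j)).symm
    have hprod : ∏ k ∈ Finset.univ.erase j, (A.updateRow i (Pi.single j 1)) (σ k) k
        = ∏ k ∈ Finset.univ.erase j, A (σ k) k := by
      refine Finset.prod_congr rfl fun k hk => ?_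
      have hk' : k ≠ j := Finset.ne_of_mem_erase hk
      have hne : σ k ≠ i := fun hc => hk' (σ.injective (hc.trans h.symm))
      simp [Matrix.updateRow_apply, hne]
    rw [hsplit, h, hprod]
    simp [Matrix.updateRow_apply, Units.smul_def, zsmul_eq_mul]
  · rw [if_neg h]
    have hzero : ∏ k, (A.updateRow i (Pi.single j 1)) (σ k) k = 0 := by
      refine Finset.prod_eq_zero (Finset.mem_univ (σ.symm i)) ?_
      have h1' : σ (σ.symm i) = i := σ.apply_symm_apply i
      have h2 : σ.symm i ≠ j := fun hc => h (by rw [← hc, h1'])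
      simp [Matrix.updateRow_apply, h1', Pi.single_eq_of_ne h2]
    rw [hzero]
    simp

end PiolaAux

private noncomputable def piolaF (n : ℕ) (g : Fin n → Fin n → (Fin n → ℝ) → ℝ) (x : Fin n → ℝ)
    (i : Fin n) : Equiv.Perm (Fin n) × Fin n × Fin n → ℝ := fun p =>
  if p.1 p.2.1 = i ∧ p.2.2 ≠ p.2.1 then
    ((Equiv.Perm.sign p.1 : ℤ) : ℝ) *
      ((∏ k ∈ (Finset.univ.erase p.2.1).erase p.2.2, g (p.1 k) k x) *
        fderiv ℝ (g (p.1 p.2.2) p.2.2) x (Pi.single p.2.1 1))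
  else 0

private lemma piolaF_sum_eq_zero (n : ℕ) (g : Fin n → Fin n → (Fin n → ℝ) → ℝ)
    (x : Fin n → ℝ) (i : Fin n)
    (hsymm : ∀ a b c : Fin n,
      fderiv ℝ (g a b) x (Pi.single c 1) = fderiv ℝ (g a c) x (Pi.single b 1)) :
    ∑ p : Equiv.Perm (Fin n) × Fin n × Fin n, piolaF n g x i p = 0 := by
  classical
  refine Finset.sum_ninvolution
    (fun p => (p.1 * Equiv.swap p.2.1 p.2.2, p.2.2, p.2.1)) ?h1 ?h2
    (fun _ => Finset.mem_univ _) ?h3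
  · -- h1 : f p + f (e p) = 0
    rintro ⟨σ, j, l⟩
    by_cases hc : σ j = i ∧ l ≠ j
    · obtain ⟨hc1, hc2⟩ := hc
      have hswap : (σ * Equiv.swap j l) l = i := by
        rw [Equiv.Perm.mul_apply, Equiv.swap_apply_right, hc1]
      have hsign : (((Equiv.Perm.sign (σ * Equiv.swap j l)) : ℤ) : ℝ)
          = -(((Equiv.Perm.sign σ) : ℤ) : ℝ) := by
        rw [Equiv.Perm.sign_mul, Equiv.Perm.sign_swap (Ne.symm hc2)]
        push_cast
        ring
      have hset : (Finset.univ.erase l).erase j = (Finset.univ.erase j).erase l :=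
        Finset.erase_right_comm
      have hprod : ∏ k ∈ (Finset.univ.erase l).erase j, g ((σ * Equiv.swap j l) k) k x
          = ∏ k ∈ (Finset.univ.erase j).erase l, g (σ k) k x := by
        rw [hset]
        refine Finset.prod_congr rfl fun k hk => ?_
        have hkl : k ≠ l := Finset.ne_of_mem_erase hk
        have hkj : k ≠ j := Finset.ne_of_mem_erase (Finset.mem_of_mem_erase hk)
        rw [Equiv.Perm.mul_apply, Equiv.swap_apply_of_ne_of_ne hkj hkl]
      have hD : fderiv ℝ (g ((σ * Equiv.swap j l) j) j) x (Pi.single l 1)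
          = fderiv ℝ (g (σ l) l) x (Pi.single j 1) := by
        rw [Equiv.Perm.mul_apply, Equiv.swap_apply_left]
        exact hsymm (σ l) j l
      simp only [piolaF, hc1, hc2, hswap, Ne.symm hc2, ne_eq, not_false_iff, and_self,
        if_true, true_and, if_pos]
      rw [hsign, hprod, hD]
      ring
    · have hc' : ¬((σ * Equiv.swap j l) l = i ∧ j ≠ l) := by
        rw [Equiv.Perm.mul_apply, Equiv.swap_apply_right]
        intro hcc
        exact hc ⟨hcc.1, Ne.symm hcc.2⟩
      simp only [piolaF]
      rw [if_neg hc, if_neg hc', add_zero]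
  · -- h2
    rintro ⟨σ, j, l⟩ hne heq
    have hc : σ j = i ∧ l ≠ j := by
      by_contra hcc
      simp [piolaF, hcc] at hne
    have := congrArg (fun p : Equiv.Perm (Fin n) × Fin n × Fin n => p.2.1) heq
    exact hc.2 this
  · -- h3
    rintro ⟨σ, j, l⟩
    have h : σ * Equiv.swap j l * Equiv.swap l j = σ := by
      rw [Equiv.swap_comm l j, mul_assoc, Equiv.swap_mul_self, mul_one]
    simp [h]

/-- Piola identity: for a C² map `S : ℝⁿ → ℝⁿ` with Jacobian `F(x) = DS(x)`,
the column divergences of the adjugate of `F` vanish: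
`∑_j ∂_{x_j} (adj F)_{ji} = 0`; equivalently, wherever `F` is invertible (with
`J = det F`), `∑_j ∂_{x_j} (J (F⁻¹)_{ji}) = 0`. -/
theorem piola_identity
    (n : ℕ) (hn : 1 ≤ n) (S : (Fin n → ℝ) → (Fin n → ℝ))
    (hS : ContDiff ℝ 2 S)
    (F : (Fin n → ℝ) → Matrix (Fin n) (Fin n) ℝ)
    (hF : ∀ x, F x = Matrix.of fun i j => fderiv ℝ S x (Pi.single j 1) i) :
    (∀ (i : Fin n) (x : Fin n → ℝ),
        ∑ j, fderiv ℝ (fun y => (F y).adjugate j i) x (Pi.single j 1) = 0) ∧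
      ((∀ x, IsUnit (F x).det) → ∀ (i : Fin n) (x : Fin n → ℝ),
        ∑ j, fderiv ℝ (fun y => (F y).det * (F y)⁻¹ j i) x (Pi.single j 1) = 0) := by
  classical
  have key : ∀ (i : Fin n) (x : Fin n → ℝ),
      ∑ j, fderiv ℝ (fun y => (F y).adjugate j i) x (Pi.single j 1) = 0 := by
    intro i x
    set g : Fin n → Fin n → (Fin n → ℝ) → ℝ :=
      fun a b y => fderiv ℝ S y (Pi.single b 1) a with hgdef
    have hdiff : ∀ a b : Fin n, HasFDerivAt (g a b) (fderiv ℝ (g a b) x) x := fun a b =>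
      (((piola_entry_contDiff hS a b).differentiable (by norm_num)) x).hasFDerivAt
    have hterm : ∀ j : Fin n,
        fderiv ℝ (fun y => (F y).adjugate j i) x (Pi.single j 1)
          = ∑ σ : Equiv.Perm (Fin n), ∑ l : Fin n, piolaF n g x i (σ, j, l) := by
      intro j
      have hfun : (fun y => (F y).adjugate j i)
          = fun y => ∑ σ : Equiv.Perm (Fin n),
              (if σ j = i then
                ((Equiv.Perm.sign σ : ℤ) : ℝ) * ∏ k ∈ Finset.univ.erase j, g (σ k) k y
               else 0) := by
        funext y
        rw [hF y, piola_adjugate_entry]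
        rfl
      rw [hfun]
      have hσ : ∀ σ : Equiv.Perm (Fin n), HasFDerivAt
          (fun y => if σ j = i then
              ((Equiv.Perm.sign σ : ℤ) : ℝ) * ∏ k ∈ Finset.univ.erase j, g (σ k) k y
            else 0)
          (if σ j = i then
              ((Equiv.Perm.sign σ : ℤ) : ℝ) •
                (∑ l ∈ Finset.univ.erase j,
                  (∏ k ∈ (Finset.univ.erase j).erase l, g (σ k) k x) • fderiv ℝ (g (σ l) l) x)
            else 0) x := by
        intro σ
        by_cases h : σ j = i
        · simp only [if_pos h]
          exact (HasFDerivAt.finset_prod (fun k _ => hdiff (σ k) k)).const_mul _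
        · simp only [if_neg h]
          exact hasFDerivAt_const 0 x
      rw [(HasFDerivAt.fun_sum (fun σ (_ : σ ∈ Finset.univ) => hσ σ)).fderiv]
      rw [ContinuousLinearMap.sum_apply]
      refine Finset.sum_congr rfl fun σ _ => ?_
      by_cases h : σ j = i
      · rw [if_pos h]
        have hite : ∀ l : Fin n, piolaF n g x i (σ, j, l)
            = if l ∈ Finset.univ.erase j then
                ((Equiv.Perm.sign σ : ℤ) : ℝ) *
                  ((∏ k ∈ (Finset.univ.erase j).erase l, g (σ k) k x) *
                    fderiv ℝ (g (σ l) l) x (Pi.single j 1))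
              else 0 := by
          intro l
          simp [piolaF, h, Finset.mem_erase]
        rw [Finset.sum_congr rfl fun l _ => hite l, Finset.sum_ite_mem,
          Finset.univ_inter]
        simp only [ContinuousLinearMap.smul_apply, ContinuousLinearMap.sum_apply,
          smul_eq_mul, Finset.mul_sum]
        try exact Finset.sum_congr rfl fun l _ => by ring
      · rw [if_neg h]
        have : ∀ l : Fin n, piolaF n g x i (σ, j, l) = 0 := by
          intro l
          simp [piolaF, h]
        simp [this]
    calc ∑ j, fderiv ℝ (fun y => (F y).adjugate j i) x (Pi.single j 1)
        = ∑ j : Fin n, ∑ σ : Equiv.Perm (Fin n), ∑ l : Fin n, piolaF n g x i (σ, j, l) :=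
          Finset.sum_congr rfl fun j _ => hterm j
      _ = ∑ σ : Equiv.Perm (Fin n), ∑ j : Fin n, ∑ l : Fin n, piolaF n g x i (σ, j, l) :=
          Finset.sum_comm
      _ = ∑ p : Equiv.Perm (Fin n) × Fin n × Fin n, piolaF n g x i p := by
          rw [Fintype.sum_prod_type]
          exact Finset.sum_congr rfl fun σ _ =>
            (Fintype.sum_prod_type (f := fun q : Fin n × Fin n => piolaF n g x i (σ, q))).symm
      _ = 0 := piolaF_sum_eq_zero n g x i fun a b c => piola_entry_symm hS a b c x
  refine ⟨key, fun hU i x => ?_⟩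
  have hfun : ∀ j : Fin n, (fun y => (F y).det * (F y)⁻¹ j i)
      = fun y => (F y).adjugate j i := by
    intro j
    funext y
    rw [Matrix.inv_def]
    simp only [Matrix.smul_apply, smul_eq_mul]
    rw [← mul_assoc, Ring.mul_inverse_cancel _ (hU y), one_mul]
  calc ∑ j, fderiv ℝ (fun y => (F y).det * (F y)⁻¹ j i) x (Pi.single j 1)
      = ∑ j, fderiv ℝ (fun y => (F y).adjugate j i) x (Pi.single j 1) :=
        Finset.sum_congr rfl fun j _ => by rw [hfun j]
    _ = 0 := key i x
end

section
/- Let n ≥ 1 and let D̂ ∈ ℝ^{n×n} be a constant matrix. Let S : ℝ × ℝⁿ → ℝⁿ be twice continuously differentiable such that for each t the map S(t,·) : ℝⁿ → ℝⁿ is a bijection and its spatial Jacobian F(t,x) := D_x S(t,x) is invertible for all (t,x); set J(t,x) := det F(t,x). Let ĉ : ℝ × ℝⁿ → ℝ be twice continuously differentiable and define the pullback c(t,x) := ĉ(t, S(t,x)) and the domain velocity v̂(t, x̂) := ∂_t S(t, S(t,·)⁻¹(x̂)). Then for all (t,x) the pointwise identity holds: ∂_t ( J(t,x) c(t,x) )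 − div_x ( J(t,x) F(t,x)⁻¹ D̂ F(t,x)⁻ᵀ ∇_x c (t,x) ) = J(t,x) · [ ∂_t ĉ + div_{x̂} ( ĉ v̂ − D̂ ∇_{x̂} ĉ ) ](t, S(t,x)). In particular, if ĉ satisfies the advection–diffusion equation ∂_t ĉ + div_{x̂}(ĉ v̂ − D̂ ∇_{x̂} ĉ) = f̂ at all points (t, S(t,x)), then the pullback c satisfies ∂_t(J c) − div_x( J F⁻¹ D̂ F⁻ᵀ ∇_x c ) = J · (f̂ ∘ S) on the reference domain. -/
open Matrix

noncomputable def detCMM (ι : Type*) [Fintype ι] [DecidableEq ι] :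
    ContinuousMultilinearMap ℝ (fun _ : ι => ι → ℝ) ℝ :=
  MultilinearMap.mkContinuous (Matrix.detRowAlternating :
      (ι → ℝ) [⋀^ι]→ₗ[ℝ] ℝ).toMultilinearMap
    (Nat.factorial (Fintype.card ι)) (by
      intro m
      rw [AlternatingMap.coe_multilinearMap]
      change ‖Matrix.detRowAlternating (R := ℝ) (n := ι) m‖ ≤ _
      have h1 : Matrix.detRowAlternating (R := ℝ) (n := ι) m = Matrix.det (Matrix.of m) := rfl
      rw [h1, Matrix.det_apply']
      refine le_trans (norm_sum_le _ _) ?_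
      have hcard : (Finset.univ : Finset (Equiv.Perm ι)).card = Nat.factorial (Fintype.card ι) := by
        simp [Fintype.card_perm]
      have key : ∀ σ : Equiv.Perm ι, ‖(Equiv.Perm.sign σ : ℝ) * ∏ i, Matrix.of m (σ i) i‖
          ≤ ∏ i, ‖m i‖ := by
        intro σ
        rw [norm_mul]
        have hsign : ‖((Equiv.Perm.sign σ : ℤ) : ℝ)‖ = 1 := by
          rcases Int.units_eq_one_or (Equiv.Perm.sign σ) with h | h <;> simp [h]
        rw [hsign, one_mul]
        calc ‖∏ i, Matrix.of m (σ i) i‖ ≤ ∏ i, ‖m (σ i) i‖ := by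
              simpa using norm_prod_le' Finset.univ (fun i => Matrix.of m (σ i) i)
          _ ≤ ∏ i, ‖m (σ i)‖ := by
              refine Finset.prod_le_prod (fun _ _ => norm_nonneg _) fun i _ => ?_
              exact norm_le_pi_norm (m (σ i)) i
          _ = ∏ i, ‖m i‖ := Equiv.prod_comp σ (fun i => ‖m i‖)
      calc ∑ σ : Equiv.Perm ι, ‖(Equiv.Perm.sign σ : ℝ) * ∏ i, Matrix.of m (σ i) i‖
          ≤ ∑ _σ : Equiv.Perm ι, ∏ i, ‖m i‖ := Finset.sum_le_sum fun σ _ => key σ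
        _ = (Nat.factorial (Fintype.card ι)) * ∏ i, ‖m i‖ := by
            rw [Finset.sum_const, hcard, nsmul_eq_mul]
      )

lemma detCMM_apply {ι : Type*} [Fintype ι] [DecidableEq ι] (m : ι → ι → ℝ) :
    detCMM ι m = Matrix.det (Matrix.of m) := rfl


section Master
variable {E : Type*} [NormedAddCommGroup E] [NormedSpace ℝ E]
    {κ : Type*} [Fintype κ] [DecidableEq κ]

theorem piola_master
    (bvec : κ → E) (coord : κ → E →L[ℝ] ℝ)
    (hbasis : ∀ v : E, v = ∑ i, coord i v • bvec i)
    (T : E → E) (hT : ContDiff ℝ 2 T)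
    (M : E → Matrix κ κ ℝ)
    (hM : ∀ q, M q = Matrix.of fun i j => coord i (fderiv ℝ T q (bvec j)))
    (G : κ → E → ℝ) (p : E)
    (hG : ∀ k, DifferentiableAt ℝ (G k) (T p)) :
    ∑ j, fderiv ℝ (fun q => ∑ k, Matrix.adjugate (M q) j k * G k (T q)) p (bvec j)
      = (M p).det * ∑ k, fderiv ℝ (G k) (T p) (bvec k) := by
  have hTd : Differentiable ℝ T := hT.differentiable two_ne_zero
  have hfd : ContDiff ℝ 1 (fderiv ℝ T) := hT.fderiv_right (le_refl 2)
  have hMC : ∀ i j, ContDiff ℝ 1 (fun q => M q i j) := by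
    intro i j
    have h : (fun q => M q i j) = fun q => coord i (fderiv ℝ T q (bvec j)) := by
      funext q; rw [hM q]; rfl
    rw [h]
    exact (coord i).contDiff.comp (hfd.clm_apply contDiff_const)
  have hMdiff : ∀ i j, Differentiable ℝ (fun q => M q i j) :=
    fun i j => (hMC i j).differentiable one_ne_zero
  have Dsym : ∀ i q j, fderiv ℝ (fun x => M x i q) p (bvec j)
      = fderiv ℝ (fun x => M x i j) p (bvec q) := by
    intro i q j
    set Ti : E → ℝ := fun x => coord i (T x) with hTidef
    have hTi : ContDiff ℝ 2 Ti := (coord i).contDiff.comp hT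
    have hTid : Differentiable ℝ Ti := hTi.differentiable two_ne_zero
    have hMf : ∀ j', (fun x => M x i j') = fun x => fderiv ℝ Ti x (bvec j') := by
      intro j'; funext x
      have hcomp : fderiv ℝ Ti x = (coord i).comp (fderiv ℝ T x) :=
        ((coord i).hasFDerivAt.comp x (hTd x).hasFDerivAt).fderiv
      rw [hM x, hcomp]; rfl
    have hf' : ∀ y, HasFDerivAt Ti (fderiv ℝ Ti y) y := fun y => (hTid y).hasFDerivAt
    have hf'd : DifferentiableAt ℝ (fderiv ℝ Ti) p :=
      ((hTi.fderiv_right (le_refl 2)).differentiable one_ne_zero) p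
    have hf'' : HasFDerivAt (fderiv ℝ Ti) (fderiv ℝ (fderiv ℝ Ti) p) p := hf'd.hasFDerivAt
    have hsym := second_derivative_symmetric hf' hf'' (bvec j) (bvec q)
    have keyd : ∀ j', HasFDerivAt (fun x => fderiv ℝ Ti x (bvec j'))
        ((ContinuousLinearMap.apply ℝ ℝ (bvec j')).comp (fderiv ℝ (fderiv ℝ Ti) p)) p :=
      fun j' => (ContinuousLinearMap.apply ℝ ℝ (bvec j')).hasFDerivAt.comp p hf''
    rw [hMf q, hMf j, (keyd q).fderiv, (keyd j).fderiv]
    simpa using hsym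
  classical
  set rowD : κ → E →L[ℝ] (κ → ℝ) :=
    fun i => ContinuousLinearMap.pi (fun j => fderiv ℝ (fun q => M q i j) p) with hrowDdef
  have hrow : ∀ i, HasFDerivAt (fun q => M q i) (rowD i) p :=
    fun i => hasFDerivAt_pi.2 fun j => (hMdiff i j p).hasFDerivAt
  have hadj : ∀ (q : E) (j k : κ), Matrix.adjugate (M q) j k
      = detCMM κ (Function.update (M q) k (Pi.single j 1)) := by
    intro q j k
    rw [Matrix.adjugate_apply]
    rfl
  have lin_exp : ∀ (X : κ → κ → ℝ) (i : κ) (w : κ → ℝ),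
      detCMM κ (Function.update X i w)
        = ∑ q, w q * detCMM κ (Function.update X i (Pi.single q 1)) := by
    intro X i w
    have hw : ∑ q, w q • (Pi.single q (1:ℝ) : κ → ℝ) = w := by
      funext l
      simp [Finset.sum_apply, Pi.single_apply]
    calc detCMM κ (Function.update X i w)
        = ((detCMM κ).toContinuousLinearMap X i) w := by
          rw [ContinuousMultilinearMap.toContinuousLinearMap_apply]
      _ = ((detCMM κ).toContinuousLinearMap X i) (∑ q, w q • (Pi.single q (1:ℝ) : κ → ℝ)) := by rw [hw]
      _ = ∑ q, w q * detCMM κ (Function.update X i (Pi.single q 1)) := by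
          rw [map_sum]
          refine Finset.sum_congr rfl fun q _ => ?_
          rw [ContinuousLinearMap.map_smul, ContinuousMultilinearMap.toContinuousLinearMap_apply, smul_eq_mul]
  have antisym : ∀ (X : κ → κ → ℝ) (i k j q : κ), i ≠ k →
      detCMM κ (Function.update (Function.update X k (Pi.single j 1)) i (Pi.single q 1))
      = - detCMM κ (Function.update (Function.update X k (Pi.single q 1)) i (Pi.single j 1)) := by
    intro X i k j q hik
    have hkim : k ≠ i := hik.symm
    have hfun : ((Function.update (Function.update X k (Pi.single q 1)) i (Pi.single j 1))
          ∘ (Equiv.swap k i))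
        = Function.update (Function.update X k (Pi.single j 1)) i (Pi.single q 1) := by
      funext l
      rcases eq_or_ne l k with rfl | hlk
      · show (Function.update (Function.update X l (Pi.single q 1)) i (Pi.single j 1))
            ((Equiv.swap l i) l) = _
        rw [Equiv.swap_apply_left, Function.update_self, Function.update_of_ne hkim,
          Function.update_self]
      rcases eq_or_ne l i with rfl | hli
      · show (Function.update (Function.update X k (Pi.single q 1)) l (Pi.single j 1))
            ((Equiv.swap k l) l) = _
        rw [Equiv.swap_apply_right, Function.update_of_ne hkim, Function.update_self,
          Function.update_self]
      · show (Function.update (Function.update X k (Pi.single q 1)) i (Pi.single j 1))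
            ((Equiv.swap k i) l) = _
        rw [Equiv.swap_apply_of_ne_of_ne hlk hli, Function.update_of_ne hli,
          Function.update_of_ne hlk, Function.update_of_ne hli, Function.update_of_ne hlk]
    have hswap := AlternatingMap.map_swap (Matrix.detRowAlternating (R := ℝ) (n := κ))
      (Function.update (Function.update X k (Pi.single q 1)) i (Pi.single j 1)) hkim
    calc detCMM κ (Function.update (Function.update X k (Pi.single j 1)) i (Pi.single q 1))
        = Matrix.detRowAlternating ((Function.update (Function.update X k (Pi.single q 1)) i
            (Pi.single j 1)) ∘ (Equiv.swap k i)) := by rw [hfun]; rfl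
      _ = - detCMM κ (Function.update (Function.update X k (Pi.single q 1)) i
            (Pi.single j 1)) := by
          rw [hswap]; rfl
  have hadjD : ∀ (j k : κ), HasFDerivAt (fun q => Matrix.adjugate (M q) j k)
      (∑ i : κ, ((detCMM κ).toContinuousLinearMap
          (Function.update (M p) k (Pi.single j 1)) i).comp
        (if i = k then 0 else rowD i)) p := by
    intro j k
    have hg : ∀ i : κ, HasFDerivAt (fun q => Function.update (M q) k (Pi.single j 1) i)
        ((if i = k then 0 else rowD i : E →L[ℝ] (κ → ℝ))) p := by
      intro i
      by_cases hik : i = k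
      · subst hik
        have heq : (fun q => Function.update (M q) i (Pi.single j 1) i)
            = fun _ => Pi.single j (1:ℝ) := by
          funext q; exact Function.update_self _ _ _
        rw [if_pos rfl, heq]
        exact hasFDerivAt_const _ _
      · have heq : (fun q => Function.update (M q) k (Pi.single j 1) i) = fun q => M q i := by
          funext q; exact Function.update_of_ne hik _ _
        rw [if_neg hik, heq]
        exact hrow i
    have h := HasFDerivAt.multilinear_comp (detCMM κ) hg
    have heq : (fun q => Matrix.adjugate (M q) j k)
        = fun q => detCMM κ (fun i => Function.update (M q) k (Pi.single j 1) i) := by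
      funext q; rw [hadj q j k]
    rw [heq]
    exact h
  have piola : ∀ k : κ, ∑ j, fderiv ℝ (fun q => Matrix.adjugate (M q) j k) p (bvec j) = 0 := by
    intro k
    have hval : ∀ j j' : κ, fderiv ℝ (fun q => Matrix.adjugate (M q) j k) p (bvec j')
        = ∑ i : κ, ∑ q : κ, (if i = k then 0 else
            fderiv ℝ (fun x => M x i q) p (bvec j')
              * detCMM κ (Function.update (Function.update (M p) k (Pi.single j 1)) i
                  (Pi.single q 1))) := by
      intro j j'
      rw [(hadjD j k).fderiv]
      rw [ContinuousLinearMap.sum_apply]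
      refine Finset.sum_congr rfl fun i _ => ?_
      by_cases hik : i = k
      · subst hik
        simp
      · rw [if_neg hik]
        simp only [if_neg hik, ContinuousLinearMap.comp_apply,
          ContinuousMultilinearMap.toContinuousLinearMap_apply]
        rw [lin_exp]
        refine Finset.sum_congr rfl fun q _ => ?_
        congr 1
    have step1 : ∑ j, fderiv ℝ (fun q => Matrix.adjugate (M q) j k) p (bvec j)
        = ∑ i : κ, ∑ j : κ, ∑ q : κ, (if i = k then 0 else
            fderiv ℝ (fun x => M x i q) p (bvec j)
              * detCMM κ (Function.update (Function.update (M p) k (Pi.single j 1)) i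
                  (Pi.single q 1))) := by
      rw [Finset.sum_congr rfl fun j _ => hval j j]
      exact Finset.sum_comm
    rw [step1]
    refine Finset.sum_eq_zero fun i _ => ?_
    by_cases hik : i = k
    · simp [hik]
    · simp only [if_neg hik]
      set t : κ → κ → ℝ := fun j q =>
        fderiv ℝ (fun x => M x i q) p (bvec j)
          * detCMM κ (Function.update (Function.update (M p) k (Pi.single j 1)) i
              (Pi.single q 1)) with htdef
      have hanti : ∀ j q, t j q = - t q j := by
        intro j q
        rw [htdef]
        simp only
        rw [Dsym i q j, antisym (M p) i k j q hik]
        ring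
      have h2 : ∑ j, ∑ q, t j q = - ∑ j, ∑ q, t j q := by
        calc ∑ j, ∑ q, t j q = ∑ j, ∑ q, - t q j := by
              refine Finset.sum_congr rfl fun j _ => Finset.sum_congr rfl fun q _ => hanti j q
          _ = - ∑ j, ∑ q, t q j := by simp
          _ = - ∑ j, ∑ q, t j q := by rw [Finset.sum_comm]
      linarith
  have hGT : ∀ k, DifferentiableAt ℝ (fun q => G k (T q)) p :=
    fun k => (hG k).comp p (hTd p)
  have hadjd : ∀ j k, DifferentiableAt ℝ (fun q => Matrix.adjugate (M q) j k) p :=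
    fun j k => (hadjD j k).differentiableAt
  have chain : ∀ k j, fderiv ℝ (fun q => G k (T q)) p (bvec j)
      = ∑ l, M p l j * fderiv ℝ (G k) (T p) (bvec l) := by
    intro k j
    have hcomp : fderiv ℝ (fun q => G k (T q)) p
        = (fderiv ℝ (G k) (T p)).comp (fderiv ℝ T p) :=
      (((hG k).hasFDerivAt).comp p (hTd p).hasFDerivAt).fderiv
    rw [hcomp]
    simp only [ContinuousLinearMap.comp_apply]
    conv_lhs => rw [hbasis (fderiv ℝ T p (bvec j))]
    rw [map_sum]
    refine Finset.sum_congr rfl fun l _ => ?_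
    rw [ContinuousLinearMap.map_smul, smul_eq_mul]
    congr 1
    rw [hM p]
    rfl
  have expand : ∀ j, fderiv ℝ (fun q => ∑ k, Matrix.adjugate (M q) j k * G k (T q)) p (bvec j)
      = ∑ k, (fderiv ℝ (fun q => Matrix.adjugate (M q) j k) p (bvec j) * G k (T p)
          + Matrix.adjugate (M p) j k * fderiv ℝ (fun q => G k (T q)) p (bvec j)) := by
    intro j
    rw [fderiv_fun_sum (fun k _ => ((hadjd j k).fun_mul (hGT k)))]
    rw [ContinuousLinearMap.sum_apply]
    refine Finset.sum_congr rfl fun k _ => ?_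
    rw [fderiv_fun_mul (hadjd j k) (hGT k)]
    simp only [ContinuousLinearMap.add_apply, ContinuousLinearMap.smul_apply, smul_eq_mul]
    ring
  have key : ∀ l k, ∑ j, M p l j * Matrix.adjugate (M p) j k
      = (M p).det * (if l = k then 1 else 0) := by
    intro l k
    have h := congrArg (fun A => A l k) (Matrix.mul_adjugate (M p))
    simpa [Matrix.mul_apply, Matrix.one_apply, Matrix.smul_apply] using h
  calc ∑ j, fderiv ℝ (fun q => ∑ k, Matrix.adjugate (M q) j k * G k (T q)) p (bvec j)
      = ∑ j, ∑ k, (fderiv ℝ (fun q => Matrix.adjugate (M q) j k) p (bvec j) * G k (T p)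
          + Matrix.adjugate (M p) j k * fderiv ℝ (fun q => G k (T q)) p (bvec j)) :=
        Finset.sum_congr rfl fun j _ => expand j
    _ = ∑ k, ∑ j, (fderiv ℝ (fun q => Matrix.adjugate (M q) j k) p (bvec j) * G k (T p)
          + Matrix.adjugate (M p) j k * fderiv ℝ (fun q => G k (T q)) p (bvec j)) :=
        Finset.sum_comm
    _ = ∑ k, ((∑ j, fderiv ℝ (fun q => Matrix.adjugate (M q) j k) p (bvec j)) * G k (T p)
          + ∑ j, Matrix.adjugate (M p) j k * fderiv ℝ (fun q => G k (T q)) p (bvec j)) := by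
        refine Finset.sum_congr rfl fun k _ => ?_
        rw [Finset.sum_add_distrib, Finset.sum_mul]
    _ = ∑ k, ∑ j, Matrix.adjugate (M p) j k * fderiv ℝ (fun q => G k (T q)) p (bvec j) := by
        refine Finset.sum_congr rfl fun k _ => ?_
        rw [piola k, zero_mul, zero_add]
    _ = ∑ k, ∑ j, ∑ l, Matrix.adjugate (M p) j k
          * (M p l j * fderiv ℝ (G k) (T p) (bvec l)) := by
        refine Finset.sum_congr rfl fun k _ => Finset.sum_congr rfl fun j _ => ?_
        rw [chain k j, Finset.mul_sum]
    _ = ∑ k, ∑ l, (∑ j, M p l j * Matrix.adjugate (M p) j k)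
          * fderiv ℝ (G k) (T p) (bvec l) := by
        refine Finset.sum_congr rfl fun k _ => ?_
        rw [Finset.sum_comm]
        refine Finset.sum_congr rfl fun l _ => ?_
        rw [Finset.sum_mul]
        refine Finset.sum_congr rfl fun j _ => by ring
    _ = ∑ k, (M p).det * fderiv ℝ (G k) (T p) (bvec k) := by
        refine Finset.sum_congr rfl fun k _ => ?_
        rw [Finset.sum_congr rfl fun l _ => by rw [key l k]]
        simp [ite_mul, Finset.sum_ite_eq]
    _ = (M p).det * ∑ k, fderiv ℝ (G k) (T p) (bvec k) := by rw [Finset.mul_sum]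

end Master

section Appl

/-- coordinate functionals on `ℝ × (Fin n → ℝ)` -/
noncomputable def pcoord (n : ℕ) : (Unit ⊕ Fin n) → (ℝ × (Fin n → ℝ)) →L[ℝ] ℝ
  | .inl _ => ContinuousLinearMap.fst ℝ ℝ (Fin n → ℝ)
  | .inr j => (ContinuousLinearMap.proj j).comp (ContinuousLinearMap.snd ℝ ℝ (Fin n → ℝ))

/-- standard basis vectors on `ℝ × (Fin n → ℝ)` -/
noncomputable def pbvec (n : ℕ) : (Unit ⊕ Fin n) → ℝ × (Fin n → ℝ)
  | .inl _ => (1, 0)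
  | .inr j => (0, Pi.single j 1)

lemma pbasis (n : ℕ) (v : ℝ × (Fin n → ℝ)) : v = ∑ i, pcoord n i v • pbvec n i := by
  rw [Fintype.sum_sum_type]
  apply Prod.ext
  · simp [pcoord, pbvec, Prod.fst_sum]
  · funext l
    simp [pcoord, pbvec, Prod.snd_sum, Finset.sum_apply, Pi.single_apply]

lemma pbvec_basis_eq (n : ℕ) :
    ∀ i, ((Module.Basis.singleton Unit ℝ).prod (Pi.basisFun ℝ (Fin n))) i = pbvec n i := by
  intro i
  cases i with
  | inl u =>
    apply Prod.ext
    · rw [Module.Basis.prod_apply_inl_fst]; simp [pbvec, Module.Basis.singleton_apply]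
    · rw [Module.Basis.prod_apply_inl_snd]; rfl
  | inr j =>
    apply Prod.ext
    · rw [Module.Basis.prod_apply_inr_fst]; rfl
    · rw [Module.Basis.prod_apply_inr_snd]; simp [pbvec]

end Appl

/-- Transformation of the advection–diffusion equation to the reference domain.
With `c(t,x) = ĉ(t, S(t,x))`, `F = D_x S`, `J = det F` and domain velocity
`v̂(t,x̂) = ∂_t S(t, S(t,·)⁻¹ x̂)`, one has the pointwise identity
`∂_t(J c) − div_x(J F⁻¹ D̂ F⁻ᵀ ∇_x c) = J · [∂_t ĉ + div_x̂(ĉ v̂ − D̂ ∇_x̂ ĉ)] ∘ (t, S(t,x))`.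
In particular, if `ĉ` solves the advection–diffusion equation with source `f̂`, then
the pullback `c` solves `∂_t(J c) − div_x(J F⁻¹ D̂ F⁻ᵀ ∇_x c) = J (f̂ ∘ S)`. -/
theorem advection_diffusion_pullback
    (n : ℕ) (hn : 1 ≤ n)
    (Dhat : Matrix (Fin n) (Fin n) ℝ)
    (S : ℝ × (Fin n → ℝ) → (Fin n → ℝ))
    (hS : ContDiff ℝ 2 S)
    (hSbij : ∀ t : ℝ, Function.Bijective fun y => S (t, y))
    (F : ℝ × (Fin n → ℝ) → Matrix (Fin n) (Fin n) ℝ)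
    (hF : ∀ p : ℝ × (Fin n → ℝ),
      F p = Matrix.of fun i j => fderiv ℝ S p ((0 : ℝ), Pi.single j 1) i)
    (hFinv : ∀ p : ℝ × (Fin n → ℝ), IsUnit (F p).det)
    (J : ℝ × (Fin n → ℝ) → ℝ)
    (hJ : ∀ p : ℝ × (Fin n → ℝ), J p = (F p).det)
    (chat : ℝ × (Fin n → ℝ) → ℝ)
    (hchat : ContDiff ℝ 2 chat)
    (c : ℝ × (Fin n → ℝ) → ℝ)
    (hc : ∀ p : ℝ × (Fin n → ℝ), c p = chat (p.1, S p))
    (vhat : ℝ × (Fin n → ℝ) → (Fin n → ℝ))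
    (hvhat : ∀ p : ℝ × (Fin n → ℝ),
      vhat p = fun i =>
        fderiv ℝ S (p.1, Function.invFun (fun y => S (p.1, y)) p.2) ((1 : ℝ), 0) i) :
    (∀ p : ℝ × (Fin n → ℝ),
      fderiv ℝ (fun q => J q * c q) p ((1 : ℝ), 0) -
        ∑ j, fderiv ℝ
            (fun q => ((J q • ((F q)⁻¹ * Dhat * ((F q)⁻¹)ᵀ)).mulVec
              fun k => fderiv ℝ c q ((0 : ℝ), Pi.single k 1)) j)
            p ((0 : ℝ), Pi.single j 1) =
      J p * (fderiv ℝ chat (p.1, S p) ((1 : ℝ), 0) +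
        ∑ j, fderiv ℝ
            (fun q => chat q * vhat q j -
              (Dhat.mulVec fun k => fderiv ℝ chat q ((0 : ℝ), Pi.single k 1)) j)
            (p.1, S p) ((0 : ℝ), Pi.single j 1))) ∧
    (∀ fhat : ℝ × (Fin n → ℝ) → ℝ,
      (∀ p : ℝ × (Fin n → ℝ),
        fderiv ℝ chat (p.1, S p) ((1 : ℝ), 0) +
          ∑ j, fderiv ℝ
              (fun q => chat q * vhat q j -
                (Dhat.mulVec fun k => fderiv ℝ chat q ((0 : ℝ), Pi.single k 1)) j)
              (p.1, S p) ((0 : ℝ), Pi.single j 1) = fhat (p.1, S p)) →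
      ∀ p : ℝ × (Fin n → ℝ),
        fderiv ℝ (fun q => J q * c q) p ((1 : ℝ), 0) -
          ∑ j, fderiv ℝ
              (fun q => ((J q • ((F q)⁻¹ * Dhat * ((F q)⁻¹)ᵀ)).mulVec
                fun k => fderiv ℝ c q ((0 : ℝ), Pi.single k 1)) j)
              p ((0 : ℝ), Pi.single j 1) =
        J p * fhat (p.1, S p)) := by
  classical
  have main : ∀ p : ℝ × (Fin n → ℝ),
      fderiv ℝ (fun q => J q * c q) p ((1 : ℝ), 0) -
        ∑ j, fderiv ℝ
            (fun q => ((J q • ((F q)⁻¹ * Dhat * ((F q)⁻¹)ᵀ)).mulVec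
              fun k => fderiv ℝ c q ((0 : ℝ), Pi.single k 1)) j)
            p ((0 : ℝ), Pi.single j 1) =
      J p * (fderiv ℝ chat (p.1, S p) ((1 : ℝ), 0) +
        ∑ j, fderiv ℝ
            (fun q => chat q * vhat q j -
              (Dhat.mulVec fun k => fderiv ℝ chat q ((0 : ℝ), Pi.single k 1)) j)
            (p.1, S p) ((0 : ℝ), Pi.single j 1)) := by
    intro p
    -- the空間-time map
    set Sig : ℝ × (Fin n → ℝ) → ℝ × (Fin n → ℝ) := fun q => (q.1, S q) with hSigdef
    have hSigC : ContDiff ℝ 2 Sig := contDiff_fst.prodMk hS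
    have hSd : Differentiable ℝ S := hS.differentiable two_ne_zero
    have hSigd : Differentiable ℝ Sig := hSigC.differentiable two_ne_zero
    have hchatd : Differentiable ℝ chat := hchat.differentiable two_ne_zero
    have hDSig : ∀ q, fderiv ℝ Sig q
        = (ContinuousLinearMap.fst ℝ ℝ (Fin n → ℝ)).prod (fderiv ℝ S q) :=
      fun q => (hasFDerivAt_fst.prodMk (hSd q).hasFDerivAt).fderiv
    set M : (ℝ × (Fin n → ℝ)) → Matrix (Unit ⊕ Fin n) (Unit ⊕ Fin n) ℝ :=
      fun q => Matrix.of fun i j => pcoord n i (fderiv ℝ Sig q (pbvec n j)) with hMdef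
    set Ccol : (ℝ × (Fin n → ℝ)) → Matrix (Fin n) Unit ℝ :=
      fun q => Matrix.of fun i (_ : Unit) => fderiv ℝ S q ((1:ℝ), 0) i with hCdef
    have hMeq : ∀ q, M q = Matrix.fromBlocks 1 0 (Ccol q) (F q) := by
      intro q
      ext i j
      rcases i with i | i <;> rcases j with j | j <;>
        simp [hMdef, hCdef, hDSig q, pcoord, pbvec, hF q, Matrix.one_apply]
    have hdet : ∀ q, (M q).det = J q := by
      intro q
      rw [hMeq q, Matrix.det_fromBlocks_zero₁₂, Matrix.det_one, one_mul, hJ q]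
    have hdetunit : ∀ q, IsUnit (M q).det := by
      intro q; rw [hdet q, hJ q]; exact hFinv q
    have hFFinv : ∀ q, F q * (F q)⁻¹ = 1 := fun q => Matrix.mul_nonsing_inv _ (hFinv q)
    have hMinv : ∀ q, (M q)⁻¹ = Matrix.fromBlocks 1 0 (-((F q)⁻¹ * Ccol q)) (F q)⁻¹ := by
      intro q
      apply Matrix.inv_eq_right_inv
      rw [hMeq q, Matrix.fromBlocks_multiply]
      have h1 : Ccol q * (1 : Matrix Unit Unit ℝ) + F q * -((F q)⁻¹ * Ccol q) = 0 := by
        rw [Matrix.mul_one, Matrix.mul_neg, ← Matrix.mul_assoc, hFFinv q, Matrix.one_mul,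
          add_neg_cancel]
      rw [h1, hFFinv q]
      simp [Matrix.fromBlocks_one]
    have hadjM : ∀ q, Matrix.adjugate (M q) = (M q).det • (M q)⁻¹ := by
      intro q
      rw [Matrix.inv_def, smul_smul, Ring.mul_inverse_cancel _ (hdetunit q), one_smul]
    -- pulled-back velocity
    have hvS : ∀ q, vhat (Sig q) = fun i => Ccol q i () := by
      intro q
      rw [hvhat (Sig q)]
      have hinv : Function.invFun (fun y => S (q.1, y)) (S q) = q.2 := by
        have h2 : S q = (fun y => S (q.1, y)) q.2 := by
          show S q = S (q.1, q.2); rw [Prod.mk.eta]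
        rw [h2]
        exact Function.leftInverse_invFun (hSbij q.1).injective q.2
      funext i
      show fderiv ℝ S (q.1, Function.invFun (fun y => S (q.1, y)) (S q)) ((1:ℝ), 0) i
        = fderiv ℝ S q ((1:ℝ), 0) i
      rw [hinv, Prod.mk.eta]
    have hcS : ∀ q, chat (Sig q) = c q := fun q => (hc q).symm
    have hcfun : c = fun q => chat (Sig q) := funext fun q => hc q
    -- gradient chain rule
    have hgradc : ∀ q k, fderiv ℝ c q ((0:ℝ), Pi.single k 1)
        = ∑ l, F q l k * fderiv ℝ chat (Sig q) ((0:ℝ), Pi.single l 1) := by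
      intro q k
      rw [hcfun]
      have hcomp : fderiv ℝ (fun q' => chat (Sig q')) q
          = (fderiv ℝ chat (Sig q)).comp (fderiv ℝ Sig q) :=
        ((hchatd (Sig q)).hasFDerivAt.comp q (hSigd q).hasFDerivAt).fderiv
      rw [hcomp]
      simp only [ContinuousLinearMap.comp_apply]
      rw [hDSig q]
      have hv : ((ContinuousLinearMap.fst ℝ ℝ (Fin n → ℝ)).prod (fderiv ℝ S q))
          ((0:ℝ), Pi.single k 1)
          = ∑ l, F q l k • ((0:ℝ), (Pi.single l 1 : Fin n → ℝ)) := by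
        apply Prod.ext
        · simp [Prod.fst_sum]
        · show fderiv ℝ S q ((0:ℝ), Pi.single k 1) = _
          funext i
          simp [Prod.snd_sum, Finset.sum_apply, Pi.single_apply, hF q]
      rw [hv, map_sum]
      refine Finset.sum_congr rfl fun l _ => ?_
      rw [ContinuousLinearMap.map_smul, smul_eq_mul]
    -- component functions on the deformed domain
    set G : (Unit ⊕ Fin n) → (ℝ × (Fin n → ℝ)) → ℝ := Sum.elim (fun _ => chat)
      (fun j q => chat q * vhat q j -
        (Dhat.mulVec fun k => fderiv ℝ chat q ((0:ℝ), Pi.single k 1)) j) with hGdef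
    have hadj_entries : ∀ q i j, Matrix.adjugate (M q) i j
        = J q * Matrix.fromBlocks 1 0 (-((F q)⁻¹ * Ccol q)) (F q)⁻¹ i j := by
      intro q i j
      rw [hadjM q, hMinv q, hdet q, Matrix.smul_apply, smul_eq_mul]
    have PsiInl : ∀ q, (∑ k, Matrix.adjugate (M q) (Sum.inl ()) k * G k (Sig q))
        = J q * c q := by
      intro q
      rw [Fintype.sum_sum_type]
      have h1 : ∀ u : Unit, Matrix.adjugate (M q) (Sum.inl ()) (Sum.inl u) = J q := by
        intro u; rw [hadj_entries]; simp [Matrix.one_apply]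
      have h2 : ∀ j : Fin n, Matrix.adjugate (M q) (Sum.inl ()) (Sum.inr j) = 0 := by
        intro j; rw [hadj_entries]; simp
      simp [h1, h2, hGdef, hcS q]
    have PsiInr : ∀ (j : Fin n) (q), (∑ k, Matrix.adjugate (M q) (Sum.inr j) k * G k (Sig q))
        = -(((J q • ((F q)⁻¹ * Dhat * ((F q)⁻¹)ᵀ)).mulVec
            fun k => fderiv ℝ c q ((0:ℝ), Pi.single k 1)) j) := by
      intro j q
      set ghat : Fin n → ℝ := fun l => fderiv ℝ chat (Sig q) ((0:ℝ), Pi.single l 1) with hghat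
      have hgc : (fun k => fderiv ℝ c q ((0:ℝ), Pi.single k 1)) = (F q)ᵀ.mulVec ghat := by
        funext k
        rw [hgradc q k]
        simp [Matrix.mulVec, dotProduct, Matrix.transpose_apply]
        rfl
      have hFTinv : ((F q)⁻¹)ᵀ.mulVec ((F q)ᵀ.mulVec ghat) = ghat := by
        rw [Matrix.mulVec_mulVec, ← Matrix.transpose_mul, hFFinv q, Matrix.transpose_one,
          Matrix.one_mulVec]
      have hRHS : (((J q • ((F q)⁻¹ * Dhat * ((F q)⁻¹)ᵀ)).mulVec
          fun k => fderiv ℝ c q ((0:ℝ), Pi.single k 1)) j)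
          = J q * ∑ k, (F q)⁻¹ j k * (Dhat.mulVec ghat) k := by
        rw [hgc, Matrix.smul_mulVec, ← Matrix.mulVec_mulVec, hFTinv,
          ← Matrix.mulVec_mulVec, Pi.smul_apply, smul_eq_mul]
        congr 1
      have hAdj1 : Matrix.adjugate (M q) (Sum.inr j) (Sum.inl ())
          = J q * (-(∑ k, (F q)⁻¹ j k * Ccol q k ())) := by
        rw [hadj_entries]
        simp [Matrix.mul_apply]
      have hAdj2 : ∀ k, Matrix.adjugate (M q) (Sum.inr j) (Sum.inr k) = J q * (F q)⁻¹ j k := by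
        intro k; rw [hadj_entries]; simp
      have hG2 : ∀ k, G (Sum.inr k) (Sig q)
          = c q * Ccol q k () - (Dhat.mulVec ghat) k := by
        intro k
        show chat (Sig q) * vhat (Sig q) k - _ = _
        rw [hcS q, hvS q]
      rw [Fintype.sum_sum_type, hRHS]
      have hUnit : (∑ u : Unit, Matrix.adjugate (M q) (Sum.inr j) (Sum.inl u)
            * G (Sum.inl u) (Sig q))
          = J q * (-(∑ k, (F q)⁻¹ j k * Ccol q k ())) * c q := by
        simp only [Finset.univ_unique, Finset.sum_singleton]
        rw [show (default : Unit) = () from rfl, hAdj1]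
        have : G (Sum.inl ()) (Sig q) = c q := hcS q
        rw [this]
      have hterm : ∀ k : Fin n, Matrix.adjugate (M q) (Sum.inr j) (Sum.inr k)
          * G (Sum.inr k) (Sig q)
          = J q * c q * ((F q)⁻¹ j k * Ccol q k ())
            - J q * ((F q)⁻¹ j k * (Dhat.mulVec ghat) k) := by
        intro k
        rw [hAdj2 k, hG2 k]
        ring
      rw [hUnit, Finset.sum_congr rfl fun k _ => hterm k, Finset.sum_sub_distrib,
        ← Finset.mul_sum, ← Finset.mul_sum]
      ring
    -- inverse of the space-time map, differentiability via IFT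
    set Sinv : (ℝ × (Fin n → ℝ)) → (ℝ × (Fin n → ℝ)) :=
      fun q => (q.1, Function.invFun (fun y => S (q.1, y)) q.2) with hSinvdef
    have hSigSinv : ∀ y, Sig (Sinv y) = y := by
      intro y
      have h2 : S (y.1, Function.invFun (fun z => S (y.1, z)) y.2) = y.2 :=
        Function.rightInverse_invFun (hSbij y.1).surjective y.2
      exact Prod.ext rfl h2
    have hSigInj : Function.Injective Sig := by
      rintro ⟨t, x⟩ ⟨s, y⟩ h
      have h1 : t = s := congrArg Prod.fst h
      subst h1
      have h2 : S (t, x) = S (t, y) := congrArg Prod.snd h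
      have h3 : x = y := (hSbij t).injective h2
      rw [h3]
    set bas : Module.Basis (Unit ⊕ Fin n) ℝ (ℝ × (Fin n → ℝ)) :=
      (Module.Basis.singleton Unit ℝ).prod (Pi.basisFun ℝ (Fin n)) with hbasdef
    have htoM : LinearMap.toMatrix bas bas (↑(fderiv ℝ Sig p) : _ →ₗ[ℝ] _) = M p := by
      ext i j
      rw [LinearMap.toMatrix_apply]
      have hbj : bas j = pbvec n j := pbvec_basis_eq n j
      rw [hbj]
      cases i with
      | inl u =>
        show bas.repr _ (Sum.inl u) = _
        rw [Module.Basis.prod_repr_inl, Module.Basis.singleton_repr]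
        rfl
      | inr l =>
        show bas.repr _ (Sum.inr l) = _
        rw [Module.Basis.prod_repr_inr, Pi.basisFun_repr]
        rfl
    have hdetu : IsUnit (LinearMap.toMatrix bas bas
        (↑(fderiv ℝ Sig p) : _ →ₗ[ℝ] _)).det := by
      rw [htoM]; exact hdetunit p
    set Aeq : (ℝ × (Fin n → ℝ)) ≃L[ℝ] (ℝ × (Fin n → ℝ)) :=
      (LinearEquiv.ofIsUnitDet hdetu).toContinuousLinearEquiv with hAeqdef
    have hcoe : (Aeq : (ℝ × (Fin n → ℝ)) →L[ℝ] (ℝ × (Fin n → ℝ))) = fderiv ℝ Sig p := by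
      apply ContinuousLinearMap.ext
      intro v
      rfl
    have hstrict : HasStrictFDerivAt Sig
        ((Aeq : (ℝ × (Fin n → ℝ)) ≃L[ℝ] (ℝ × (Fin n → ℝ))) :
          (ℝ × (Fin n → ℝ)) →L[ℝ] (ℝ × (Fin n → ℝ))) p := by
      rw [hcoe]
      exact hSigC.contDiffAt.hasStrictFDerivAt two_ne_zero
    have hSinvd : DifferentiableAt ℝ Sinv (Sig p) := by
      have h2 : ∀ᶠ y in nhds (Sig p), Sig (hstrict.localInverse Sig Aeq p y) = y :=
        hstrict.eventually_right_inverse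
      have heq : Sinv =ᶠ[nhds (Sig p)] hstrict.localInverse Sig Aeq p := by
        filter_upwards [h2] with y hy
        exact hSigInj ((hSigSinv y).trans hy.symm)
      exact (hstrict.to_localInverse.differentiableAt).congr_of_eventuallyEq heq
    -- differentiability of the component functions
    have hwC : ContDiff ℝ 1 (fun r : ℝ × (Fin n → ℝ) => (fderiv ℝ S r) ((1:ℝ), 0)) :=
      (hS.fderiv_right (le_refl 2)).clm_apply contDiff_const
    have hGd : ∀ k, DifferentiableAt ℝ (G k) (Sig p) := by
      intro k
      cases k with
      | inl u => exact hchatd (Sig p)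
      | inr j =>
        show DifferentiableAt ℝ (fun q => chat q * vhat q j -
          (Dhat.mulVec fun k' => fderiv ℝ chat q ((0:ℝ), Pi.single k' 1)) j) (Sig p)
        apply DifferentiableAt.sub
        · apply DifferentiableAt.mul (hchatd (Sig p))
          have hveq : (fun q => vhat q j)
              = fun q => (ContinuousLinearMap.proj j :
                  (Fin n → ℝ) →L[ℝ] ℝ) ((fderiv ℝ S (Sinv q)) ((1:ℝ), 0)) := by
            funext q; rw [hvhat q]; rfl
          rw [hveq]
          have hdS : DifferentiableAt ℝ
              (fun q => (fderiv ℝ S (Sinv q)) ((1:ℝ), 0)) (Sig p) :=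
            ((hwC.differentiable one_ne_zero) (Sinv (Sig p))).comp (Sig p) hSinvd
          exact ((ContinuousLinearMap.proj j :
            (Fin n → ℝ) →L[ℝ] ℝ).differentiableAt).comp (Sig p) hdS
        · have hmv : (fun q => (Dhat.mulVec
              fun k' => fderiv ℝ chat q ((0:ℝ), Pi.single k' 1)) j)
              = fun q => ∑ k', Dhat j k' * fderiv ℝ chat q ((0:ℝ), Pi.single k' 1) := by
            funext q; simp [Matrix.mulVec, dotProduct]
          rw [hmv]
          apply DifferentiableAt.fun_sum
          intro k' _
          apply DifferentiableAt.const_mul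
          have hck : ContDiff ℝ 1 (fun q => fderiv ℝ chat q ((0:ℝ), Pi.single k' 1)) :=
            (hchat.fderiv_right (le_refl 2)).clm_apply contDiff_const
          exact (hck.differentiable one_ne_zero) (Sig p)
    -- apply the master identity
    have master := piola_master (pbvec n) (pcoord n) (pbasis n) Sig hSigC M
      (fun q => rfl) G p hGd
    rw [Fintype.sum_sum_type, Fintype.sum_sum_type] at master
    have e1 : ∀ u : Unit, (fun q => ∑ k, Matrix.adjugate (M q) (Sum.inl u) k * G k (Sig q))
        = fun q => J q * c q := fun u => funext PsiInl
    have e2 : ∀ j : Fin n, (fun q => ∑ k, Matrix.adjugate (M q) (Sum.inr j) k * G k (Sig q))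
        = fun q => -(((J q • ((F q)⁻¹ * Dhat * ((F q)⁻¹)ᵀ)).mulVec
            fun k => fderiv ℝ c q ((0:ℝ), Pi.single k 1)) j) := fun j => funext (PsiInr j)
    simp only [Finset.univ_unique, Finset.sum_singleton] at master
    rw [e1 default] at master
    have e3 : ∀ j : Fin n,
        fderiv ℝ (fun q => ∑ k, Matrix.adjugate (M q) (Sum.inr j) k * G k (Sig q)) p
          (pbvec n (Sum.inr j))
        = -(fderiv ℝ (fun q => ((J q • ((F q)⁻¹ * Dhat * ((F q)⁻¹)ᵀ)).mulVec
            fun k => fderiv ℝ c q ((0:ℝ), Pi.single k 1)) j) p ((0:ℝ), Pi.single j 1)) := by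
      intro j
      rw [e2 j, fderiv_fun_neg]
      rfl
    rw [Finset.sum_congr rfl fun j _ => e3 j] at master
    rw [Finset.sum_neg_distrib] at master
    rw [hdet p] at master
    rw [sub_eq_add_neg]
    exact master
  refine ⟨main, ?_⟩
  intro fhat hf p
  rw [main p, hf p]
end

section
/- Let n ≥ 1 and let D : ℝⁿ → ℝ^{n×n} be continuously differentiable and ℤⁿ-periodic, with D(y) symmetric positive definite for every y ∈ ℝⁿ. Let c : ℝⁿ → ℝ be twice continuously differentiable, ℤⁿ-periodic, and satisfy the homogeneous elliptic equation div( D(y) ∇c(y) ) = 0 for all y ∈ ℝⁿ. Then c is constant. -/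
open Matrix

private lemma fderiv_translate' {E F : Type*} [NormedAddCommGroup E] [NormedSpace ℝ E]
    [NormedAddCommGroup F] [NormedSpace ℝ F] (f : E → F) (hf : Differentiable ℝ f) (v : E)
    (hper : ∀ z, f (z + v) = f z) (y : E) : fderiv ℝ f (y + v) = fderiv ℝ f y := by
  have h1 : HasFDerivAt (fun z => f (z + v))
      ((fderiv ℝ f (y + v)).comp (ContinuousLinearMap.id ℝ E)) y :=
    (hf (y + v)).hasFDerivAt.comp y ((hasFDerivAt_id y).add_const v)
  rw [ContinuousLinearMap.comp_id] at h1
  rw [funext hper] at h1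
  exact h1.fderiv.symm

private lemma insertNth_shift' (m : ℕ) (i : Fin (m+1)) (t : ℝ) (x : Fin m → ℝ) :
    i.insertNth (t+1) x
      = i.insertNth t x + (fun j => ((Pi.single i 1 : Fin (m+1) → ℤ) j : ℝ)) := by
  funext j
  refine Fin.succAboveCases i ?_ ?_ j
  · simp
  · intro k
    simp [Pi.single_eq_of_ne (Fin.succAbove_ne i k)]


/-- A Liouville-type theorem for periodic solutions of a homogeneous elliptic
equation: if `D` is a C¹, ℤⁿ-periodic field of symmetric positive definite
matrices and `c` is C², ℤⁿ-periodic with `div (D ∇c) = 0` everywhere, then `c`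
is constant. -/
theorem periodic_elliptic_solution_is_constant
    (n : ℕ) (hn : 1 ≤ n)
    (D : (Fin n → ℝ) → Matrix (Fin n) (Fin n) ℝ)
    (hDsmooth : ∀ i j, ContDiff ℝ 1 fun y => D y i j)
    (hDper : ∀ (y : Fin n → ℝ) (k : Fin n → ℤ), D (y + fun i => (k i : ℝ)) = D y)
    (hDpos : ∀ y : Fin n → ℝ, (D y).PosDef)
    (c : (Fin n → ℝ) → ℝ)
    (hc : ContDiff ℝ 2 c)
    (hcper : ∀ (y : Fin n → ℝ) (k : Fin n → ℤ), c (y + fun i => (k i : ℝ)) = c y)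
    (hpde : ∀ y : Fin n → ℝ,
      ∑ j, fderiv ℝ
          (fun z => ((D z).mulVec fun k => fderiv ℝ c z (Pi.single k 1)) j)
          y (Pi.single j 1) = 0) :
    ∃ a : ℝ, ∀ y : Fin n → ℝ, c y = a := by
  obtain ⟨m, rfl⟩ : ∃ m, n = m + 1 := ⟨n - 1, by omega⟩
  clear hn
  have hcd : Differentiable ℝ c := hc.differentiable (by norm_num)
  -- gradient components are C¹
  have hgck : ∀ k : Fin (m+1), ContDiff ℝ 1 (fun y => fderiv ℝ c y (Pi.single k 1)) :=
    fun k => (hc.fderiv_right (by norm_num)).clm_apply contDiff_const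
  -- components of G = D ∇c are C¹
  have hGj : ∀ j, ContDiff ℝ 1
      (fun y => ((D y).mulVec fun k => fderiv ℝ c y (Pi.single k 1)) j) := by
    intro j
    have h : (fun y => ((D y).mulVec fun k => fderiv ℝ c y (Pi.single k 1)) j)
        = fun y => ∑ k, D y j k * fderiv ℝ c y (Pi.single k 1) := by
      funext y; simp [Matrix.mulVec, dotProduct]
    rw [h]
    exact ContDiff.sum fun k _ => (hDsmooth j k).mul (hgck k)
  -- the flux field F
  set F : (Fin (m+1) → ℝ) → (Fin (m+1) → ℝ) :=
    fun y j => c y * ((D y).mulVec fun k => fderiv ℝ c y (Pi.single k 1)) j with hF_def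
  have hFj : ∀ j, ContDiff ℝ 1 (fun y => F y j) :=
    fun j => (hc.of_le one_le_two).mul (hGj j)
  have hFc : ContDiff ℝ 1 F := contDiff_pi.2 hFj
  -- the energy density g
  set g : (Fin (m+1) → ℝ) → ℝ := fun x =>
    dotProduct (fun k => fderiv ℝ c x (Pi.single k 1))
      ((D x).mulVec fun k => fderiv ℝ c x (Pi.single k 1)) with hg_def
  have hgcont : Continuous g := by
    have h : g = fun x => ∑ k, fderiv ℝ c x (Pi.single k 1) *
        ((D x).mulVec fun k' => fderiv ℝ c x (Pi.single k' 1)) k := by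
      funext x; simp [hg_def, dotProduct]
    rw [h]
    exact continuous_finset_sum _ fun k _ =>
      ((hgck k).continuous).mul ((hGj k).continuous)
  have hgnonneg : ∀ x, 0 ≤ g x := by
    intro x
    have := (hDpos x).posSemidef.dotProduct_mulVec_nonneg fun k => fderiv ℝ c x (Pi.single k 1)
    simpa [hg_def] using this
  -- divergence identity
  have hdiv : ∀ x, (∑ i, fderiv ℝ F x (Pi.single i 1) i) = g x := by
    intro x
    have hproj : ∀ (i : Fin (m+1)) (v : Fin (m+1) → ℝ),
        fderiv ℝ F x v i = fderiv ℝ (fun y => F y i) x v := by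
      intro i v
      have h1 : HasFDerivAt (fun y => F y i)
          (((ContinuousLinearMap.proj i : ((Fin (m+1) → ℝ)) →L[ℝ] ℝ)).comp (fderiv ℝ F x)) x :=
        ((ContinuousLinearMap.proj (R := ℝ) (φ := fun _ : Fin (m+1) => ℝ)
            i).hasFDerivAt).comp x (hFc.differentiable one_ne_zero x).hasFDerivAt
      rw [h1.fderiv]; rfl
    have hmul : ∀ i : Fin (m+1), fderiv ℝ (fun y => F y i) x (Pi.single i 1)
        = c x * fderiv ℝ (fun y => ((D y).mulVec fun k => fderiv ℝ c y (Pi.single k 1)) i)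
              x (Pi.single i 1)
          + ((D x).mulVec fun k => fderiv ℝ c x (Pi.single k 1)) i
              * fderiv ℝ c x (Pi.single i 1) := by
      intro i
      have := fderiv_fun_mul (𝕜 := ℝ) (x := x) (hcd x) ((hGj i).differentiable one_ne_zero x)
      rw [hF_def]
      rw [this]
      simp [mul_comm]
    calc (∑ i, fderiv ℝ F x (Pi.single i 1) i)
        = ∑ i, fderiv ℝ (fun y => F y i) x (Pi.single i 1) := by
          exact Finset.sum_congr rfl fun i _ => hproj i _
      _ = ∑ i, (c x * fderiv ℝ
              (fun y => ((D y).mulVec fun k => fderiv ℝ c y (Pi.single k 1)) i) x (Pi.single i 1)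
            + ((D x).mulVec fun k => fderiv ℝ c x (Pi.single k 1)) i
              * fderiv ℝ c x (Pi.single i 1)) := Finset.sum_congr rfl fun i _ => hmul i
      _ = c x * (∑ i, fderiv ℝ
              (fun y => ((D y).mulVec fun k => fderiv ℝ c y (Pi.single k 1)) i) x (Pi.single i 1))
            + ∑ i, ((D x).mulVec fun k => fderiv ℝ c x (Pi.single k 1)) i
              * fderiv ℝ c x (Pi.single i 1) := by
          rw [Finset.sum_add_distrib, Finset.mul_sum]
      _ = g x := by
          rw [hpde x, mul_zero, zero_add, hg_def]
          simp [dotProduct, mul_comm]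
  -- periodicity of F
  have hgradper : ∀ (y : Fin (m+1) → ℝ) (k : Fin (m+1) → ℤ) (j : Fin (m+1)),
      fderiv ℝ c (y + fun i => (k i : ℝ)) (Pi.single j 1) = fderiv ℝ c y (Pi.single j 1) := by
    intro y k j
    rw [fderiv_translate' c hcd _ (fun z => hcper z k) y]
  have hFper : ∀ (y : Fin (m+1) → ℝ) (k : Fin (m+1) → ℤ),
      F (y + fun i => (k i : ℝ)) = F y := by
    intro y k
    funext j
    rw [hF_def]
    simp only [hcper y k, hDper y k]
    congr 2
    funext k'
    exact hgradper y k k'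
  -- integral of g over any unit cube vanishes
  have key : ∀ a : Fin (m+1) → ℝ,
      (∫ x in Set.Icc a (fun i => a i + 1), g x) = 0 := by
    intro a
    have hle : a ≤ fun i => a i + 1 := fun i => by dsimp; linarith
    have hInt : MeasureTheory.IntegrableOn
        (fun x => ∑ i, fderiv ℝ F x (Pi.single i 1) i)
        (Set.Icc a fun i => a i + 1) := by
      have : (fun x => ∑ i, fderiv ℝ F x (Pi.single i 1) i) = g := funext hdiv
      rw [this]
      exact hgcont.continuousOn.integrableOn_compact isCompact_Icc
    have hD := MeasureTheory.integral_divergence_of_hasFDerivAt_off_countable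
      a (fun i => a i + 1) hle F (fun x => fderiv ℝ F x) ∅ Set.countable_empty
      hFc.continuous.continuousOn
      (fun x _ => (hFc.differentiable one_ne_zero x).hasFDerivAt) hInt
    have hfaces : ∀ i : Fin (m+1),
        ((∫ x in Set.Icc (a ∘ i.succAbove) ((fun i => a i + 1) ∘ i.succAbove),
            F (i.insertNth ((fun i => a i + 1) i) x) i)
          - ∫ x in Set.Icc (a ∘ i.succAbove) ((fun i => a i + 1) ∘ i.succAbove),
            F (i.insertNth (a i) x) i) = 0 := by
      intro i
      have hFeq : ∀ x : Fin m → ℝ,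
          F (i.insertNth (a i + 1) x) i = F (i.insertNth (a i) x) i := by
        intro x
        rw [insertNth_shift' m i (a i) x, hFper _ (Pi.single i 1)]
      simp only [hFeq]
      ring
    rw [← funext hdiv, hD, Finset.sum_congr rfl fun i _ => hfaces i, Finset.sum_const,
      smul_zero]
  -- pointwise vanishing of g
  have hgzero : ∀ y₀ : Fin (m+1) → ℝ, g y₀ = 0 := by
    intro y₀
    by_contra hne
    have hpos : 0 < g y₀ := lt_of_le_of_ne (hgnonneg y₀) (Ne.symm hne)
    set a : Fin (m+1) → ℝ := fun i => y₀ i - 2⁻¹ with ha_def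
    set b : Fin (m+1) → ℝ := fun i => a i + 1 with hb_def
    have h0 : (∫ x in Set.Icc a b, g x) = 0 := key a
    have hgint : MeasureTheory.IntegrableOn g (Set.Icc a b) :=
      hgcont.continuousOn.integrableOn_compact isCompact_Icc
    have hae : g =ᵐ[MeasureTheory.volume.restrict (Set.Icc a b)] 0 := by
      exact (MeasureTheory.integral_eq_zero_iff_of_nonneg hgnonneg hgint).mp h0
    have hmeas : MeasurableSet {x : Fin (m+1) → ℝ | g x ≠ 0} :=
      (isOpen_compl_singleton.preimage hgcont).measurableSet
    have hzero : MeasureTheory.volume ({x | g x ≠ 0} ∩ Set.Icc a b) = 0 := by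
      have := hae
      rw [Filter.EventuallyEq, MeasureTheory.ae_iff] at this
      rw [← MeasureTheory.Measure.restrict_apply hmeas]
      simpa using this
    set U : Set (Fin (m+1) → ℝ) :=
      {x | g x ≠ 0} ∩ Set.pi Set.univ (fun i => Set.Ioo (a i) (b i)) with hU_def
    have hUopen : IsOpen U :=
      (isOpen_compl_singleton.preimage hgcont).inter
        (isOpen_set_pi Set.finite_univ fun i _ => isOpen_Ioo)
    have hUne : U.Nonempty := by
      refine ⟨y₀, ne_of_gt hpos, ?_⟩
      intro i _
      show y₀ i ∈ Set.Ioo (a i) (b i)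
      rw [ha_def, hb_def]
      constructor
      · show y₀ i - 2⁻¹ < y₀ i; linarith
      · show y₀ i < y₀ i - 2⁻¹ + 1; linarith
    have hUpos : 0 < MeasureTheory.volume U := hUopen.measure_pos _ hUne
    have hUsub : U ⊆ {x | g x ≠ 0} ∩ Set.Icc a b := by
      refine Set.inter_subset_inter_right _ ?_
      intro x hx
      constructor <;> intro i
      · exact (hx i (Set.mem_univ i)).1.le
      · exact (hx i (Set.mem_univ i)).2.le
    exact absurd (le_antisymm (hzero ▸ MeasureTheory.measure_mono hUsub) zero_le)
      (ne_of_gt hUpos)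
  -- gradient vanishes
  have hgrad : ∀ y : Fin (m+1) → ℝ, fderiv ℝ c y = 0 := by
    intro y
    have hv : (fun k => fderiv ℝ c y (Pi.single k 1)) = 0 := by
      by_contra hne
      have := (hDpos y).dotProduct_mulVec_pos hne
      simp only [star_trivial] at this
      exact absurd (hgzero y) (ne_of_gt this)
    ext v
    have hvsum : v = ∑ i, Pi.single i (v i) := by
      simp [Finset.univ_sum_single]
    rw [ContinuousLinearMap.zero_apply, hvsum, map_sum]
    refine Finset.sum_eq_zero fun i _ => ?_
    have h1 : Pi.single i (v i) = v i • (Pi.single i 1 : Fin (m+1) → ℝ) := by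
      funext j
      rcases eq_or_ne j i with rfl | hji
      · simp
      · simp [Pi.single_eq_of_ne hji]
    rw [h1, (fderiv ℝ c y).map_smul]
    have h2 : fderiv ℝ c y (Pi.single i 1) = 0 := congrFun hv i
    rw [h2, smul_zero]
  exact ⟨c 0, fun y => is_const_of_fderiv_eq_zero hcd hgrad y 0⟩
end
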